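/- Reduction of SAT to continuous optimization (unweighted): let c_1,…,c_m be Boolean functions on n variables and let F_f(x) = Σ_{j=1}^m WFE_{c_j}(x). Then F_f(x) ≤ m for all x ∈ [−1,1]^n, and the formula f = c_1 ∧ … ∧ c_m is satisfiable if and only if there exists a ∈ [−1,1]^n with F_f(a) = m (i.e., the maximum of F_f over [−1,1]^n equals m). -/

import Mathlib

open Finset

/-- Map a Bool vector to a ±1 real vector: `true` (logical True) ↦ -1, `false` ↦ 1. -/
noncomputable def toPM {n : ℕ} (b : Fin n → Bool) : Fin n → ℝ :=
  fun i => if b i then -1 else 1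

/-- Walsh–Fourier coefficient ĝ(S) = 2^{-n} · Σ_{b∈{-1,1}^n} g(b) · ∏_{i∈S} b_i. -/
noncomputable def wfCoeff {n : ℕ} (g : (Fin n → Bool) → ℝ) (S : Finset (Fin n)) : ℝ :=
  (2 ^ n : ℝ)⁻¹ * ∑ b : Fin n → Bool, g b * ∏ i ∈ S, toPM b i

/-- Walsh–Fourier expansion (multilinear extension) of g. -/
noncomputable def WFE {n : ℕ} (g : (Fin n → Bool) → ℝ) (x : Fin n → ℝ) : ℝ :=
  ∑ S : Finset (Fin n), wfCoeff g S * ∏ i ∈ S, x i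

/-- Real {0,1} value of a Boolean function (1 = True). -/
noncomputable def bval {n : ℕ} (c : (Fin n → Bool) → Bool) : (Fin n → Bool) → ℝ :=
  fun b => if c b then 1 else 0

/-- Rounding distribution S_a(b) = ∏_{b_i = -1} (1-a_i)/2 · ∏_{b_i = +1} (1+a_i)/2. -/
noncomputable def roundProb {n : ℕ} (a : Fin n → ℝ) (b : Fin n → Bool) : ℝ :=
  ∏ i, if b i then (1 - a i) / 2 else (1 + a i) / 2

/-- Circuit-output probability COP(P,c). -/
noncomputable def COP {n : ℕ} (P : Fin n → ℝ) (c : (Fin n → Bool) → Bool) : ℝ :=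
  ∑ b : Fin n → Bool, bval c b * ∏ i, (if b i then P i else 1 - P i)


/-!
Evaluating the multilinear extension at `x ∈ [-1,1]^n` is taking the expectation of `g` under the
product distribution `roundProb x` on the cube, in which coordinate `i` is rounded to `∓1` with
probability `(1 ∓ x i)/2`. Hence each `WFE_{c_j}(x)` is a probability, at most `1`, and the sum is
`m` only if every clause holds almost surely; any point in the support of `roundProb x` then
satisfies all clauses. Conversely a satisfying assignment is a vertex where `roundProb` is a point
mass.
-/

section RoundingDistribution

variable {n : ℕ}

lemma toPM_mul_add_one (b : Fin n → Bool) (x : Fin n → ℝ) (i : Fin n) :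
    toPM b i * x i + 1 = 2 * (if b i then (1 - x i) / 2 else (1 + x i) / 2) := by
  unfold toPM
  split_ifs <;> ring

lemma prod_toPM_mul_add_one (b : Fin n → Bool) (x : Fin n → ℝ) :
    ∏ i, (toPM b i * x i + 1) = 2 ^ n * roundProb x b := by
  simp only [toPM_mul_add_one, prod_mul_distrib, prod_const, card_univ, Fintype.card_fin,
    roundProb]

theorem WFE_eq_sum_mul_roundProb (g : (Fin n → Bool) → ℝ) (x : Fin n → ℝ) :
    WFE g x = ∑ b, g b * roundProb x b := by
  have expand :
      ∀ b, ∑ S : Finset (Fin n), ∏ i ∈ S, (toPM b i * x i) = 2 ^ n * roundProb x b := by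
    intro b
    rw [← prod_toPM_mul_add_one, prod_add_one, powerset_univ]
  simp only [WFE, wfCoeff, mul_assoc, sum_mul, mul_sum]
  rw [sum_comm]
  refine sum_congr rfl fun b _ => ?_
  simp only [← mul_sum, ← prod_mul_distrib, expand]
  field_simp

lemma sum_roundProb (x : Fin n → ℝ) : ∑ b, roundProb x b = 1 := by
  unfold roundProb
  rw [← Fintype.prod_sum (fun i (j : Bool) => if j then (1 - x i) / 2 else (1 + x i) / 2)]
  refine prod_eq_one fun i _ => ?_
  simp only [Fintype.sum_bool, if_true, Bool.false_eq_true, if_false]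
  ring

lemma roundProb_nonneg {x : Fin n → ℝ} (hx : ∀ i, x i ∈ Set.Icc (-1 : ℝ) 1)
    (b : Fin n → Bool) : 0 ≤ roundProb x b :=
  prod_nonneg fun i _ => by
    obtain ⟨h₁, h₂⟩ := hx i
    split_ifs <;> linarith

lemma exists_roundProb_pos {x : Fin n → ℝ} (hx : ∀ i, x i ∈ Set.Icc (-1 : ℝ) 1) :
    ∃ b, 0 < roundProb x b :=
  ⟨fun i => decide (x i < 1), prod_pos fun i _ => by
    obtain ⟨h₁, h₂⟩ := hx i
    by_cases h : x i < 1 <;> simp [h]; linarith⟩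

lemma roundProb_toPM (b b' : Fin n → Bool) :
    roundProb (toPM b) b' = if b' = b then 1 else 0 := by
  split_ifs with h
  · subst h
    exact prod_eq_one fun i _ => by unfold toPM; split_ifs <;> norm_num
  · obtain ⟨i, hi⟩ := Function.ne_iff.mp h
    refine prod_eq_zero (mem_univ i) ?_
    unfold toPM
    cases hb' : b' i <;> cases hb : b i <;> simp_all

theorem WFE_toPM (g : (Fin n → Bool) → ℝ) (b : Fin n → Bool) : WFE g (toPM b) = g b := by
  simp [WFE_eq_sum_mul_roundProb, roundProb_toPM]

lemma toPM_mem_Icc (b : Fin n → Bool) (i : Fin n) : toPM b i ∈ Set.Icc (-1 : ℝ) 1 := by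
  unfold toPM
  split_ifs <;> norm_num

theorem WFE_le {g : (Fin n → Bool) → ℝ} {M : ℝ} (hg : ∀ b, g b ≤ M) {x : Fin n → ℝ}
    (hx : ∀ i, x i ∈ Set.Icc (-1 : ℝ) 1) : WFE g x ≤ M :=
  calc WFE g x = ∑ b, g b * roundProb x b := WFE_eq_sum_mul_roundProb g x
    _ ≤ ∑ b, M * roundProb x b :=
      sum_le_sum fun b _ => mul_le_mul_of_nonneg_right (hg b) (roundProb_nonneg hx b)
    _ = M := by rw [← mul_sum, sum_roundProb, mul_one]

theorem apply_eq_of_WFE_eq {g : (Fin n → Bool) → ℝ} {M : ℝ} (hg : ∀ b, g b ≤ M)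
    {x : Fin n → ℝ} (hx : ∀ i, x i ∈ Set.Icc (-1 : ℝ) 1) (hWFE : WFE g x = M)
    {b : Fin n → Bool} (hb : 0 < roundProb x b) : g b = M := by
  have gap_zero : ∑ b', (M - g b') * roundProb x b' = 0 := by
    simp only [sub_mul, sum_sub_distrib, ← mul_sum, sum_roundProb, ← WFE_eq_sum_mul_roundProb,
      hWFE, mul_one, sub_self]
  have gap_nonneg : ∀ b' ∈ univ, 0 ≤ (M - g b') * roundProb x b' := fun b' _ =>
    mul_nonneg (sub_nonneg.mpr (hg b')) (roundProb_nonneg hx b')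
  have := (sum_eq_zero_iff_of_nonneg gap_nonneg).mp gap_zero b (mem_univ b)
  rcases mul_eq_zero.mp this with h | h
  · linarith
  · exact absurd h hb.ne'

lemma bval_le_one (c : (Fin n → Bool) → Bool) (b : Fin n → Bool) : bval c b ≤ 1 := by
  unfold bval
  split_ifs <;> norm_num

lemma bval_eq_one_iff {c : (Fin n → Bool) → Bool} {b : Fin n → Bool} :
    bval c b = 1 ↔ c b = true := by
  unfold bval
  split_ifs with h <;> simp [h]

end RoundingDistribution

/-- Reduction of SAT to continuous optimization (unweighted). -/
theorem sat_iff_max_unweighted {n m : ℕ} (c : Fin m → (Fin n → Bool) → Bool) :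
    (∀ x : Fin n → ℝ, (∀ i, x i ∈ Set.Icc (-1 : ℝ) 1) →
      ∑ j, WFE (bval (c j)) x ≤ (m : ℝ)) ∧
    ((∃ b : Fin n → Bool, ∀ j, c j b = true) ↔
      ∃ a : Fin n → ℝ, (∀ i, a i ∈ Set.Icc (-1 : ℝ) 1) ∧
        ∑ j, WFE (bval (c j)) a = (m : ℝ)) := by
  have sum_ones : ∑ _j : Fin m, (1 : ℝ) = m := by simp
  have each_le : ∀ x : Fin n → ℝ, (∀ i, x i ∈ Set.Icc (-1 : ℝ) 1) →
      ∀ j ∈ univ, WFE (bval (c j)) x ≤ 1 := fun x hx j _ => WFE_le (bval_le_one (c j)) hx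
  refine ⟨fun x hx => sum_ones ▸ sum_le_sum (each_le x hx), ?_, ?_⟩
  · rintro ⟨b, hb⟩
    refine ⟨toPM b, toPM_mem_Icc b, ?_⟩
    simp only [WFE_toPM, bval_eq_one_iff.mpr (hb _), sum_ones]
  · rintro ⟨a, ha, hsum⟩
    have all_one := (sum_eq_sum_iff_of_le (each_le a ha)).mp (hsum.trans sum_ones.symm)
    obtain ⟨b, hb⟩ := exists_roundProb_pos ha
    exact ⟨b, fun j => bval_eq_one_iff.mp
      (apply_eq_of_WFE_eq (bval_le_one (c j)) ha (all_one j (mem_univ j)) hb)⟩
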